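/- arXiv:1311.6830 — 5 statements merged into one kernel-verified Lean document; each statement's English description precedes it below -/
import Mathlib

section
/- The function f(x) = x·(1-x)^(1-1/x) is concave on the open interval (0,1). -/
/-! With `L = log (1 - x)` we have `f = exp ∘ g` for `g x = log x + (1 - 1/x) L`, so
`f'' = f (g'² + g'')` and concavity amounts to `g'² + g'' ≤ 0`, which clears denominators to
`(x + L)² (1 - x) ≤ x³`. Putting `s = √(1 - x)`, the bound `-log s ≤ (1/s - s)/2` (that is,
`u ≤ sinh u` for `u = -log s`) gives `0 ≤ -s (x + L) ≤ x (1 - s)`, and `(1 - s)² ≤ 1 - s² = x`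
finishes. -/

open Real Set

theorem concaveOn_exp_comp_of_sq_add_deriv2_nonpos {D : Set ℝ} (hD : Convex ℝ D)
    (hDo : IsOpen D) {g g' g'' : ℝ → ℝ} (hg : ∀ x ∈ D, HasDerivAt g (g' x) x)
    (hg' : ∀ x ∈ D, HasDerivAt g' (g'' x) x) (hg'' : ∀ x ∈ D, g' x ^ 2 + g'' x ≤ 0) :
    ConcaveOn ℝ D (fun x => exp (g x)) := by
  have hexp : ∀ x ∈ D, HasDerivAt (fun x => exp (g x)) (exp (g x) * g' x) x :=
    fun x hx => (hg x hx).exp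
  refine concaveOn_of_hasDerivWithinAt2_nonpos hD (f' := fun x => exp (g x) * g' x)
    (f'' := fun x => exp (g x) * (g' x ^ 2 + g'' x))
    (fun x hx => (hexp x hx).continuousAt.continuousWithinAt) ?_ ?_ ?_ <;> rw [hDo.interior_eq]
  · exact fun x hx => (hexp x hx).hasDerivWithinAt
  · exact fun x hx => (((hexp x hx).mul (hg' x hx)).congr_deriv (by ring)).hasDerivWithinAt
  · exact fun x hx => mul_nonpos_of_nonneg_of_nonpos (exp_pos _).le (hg'' x hx)

theorem Real.sub_inv_le_two_mul_log {s : ℝ} (hs0 : 0 < s) (hs1 : s ≤ 1) :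
    s - s⁻¹ ≤ 2 * log s := by
  have h := self_le_sinh_iff.mpr (neg_nonneg.mpr (log_nonpos hs0.le hs1))
  rw [sinh_eq, neg_neg, exp_neg, exp_log hs0] at h
  linarith

theorem add_log_one_sub_sq_mul_le_cube {x : ℝ} (hx0 : 0 ≤ x) (hx1 : x < 1) :
    (x + log (1 - x)) ^ 2 * (1 - x) ≤ x ^ 3 := by
  set L := log (1 - x)
  set s := √(1 - x)
  have hs0 : 0 < s := sqrt_pos.mpr (by linarith)
  have hs2 : s ^ 2 = 1 - x := sq_sqrt (by linarith)
  have hs1 : s ≤ 1 := by nlinarith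
  have hL : L = 2 * log s := by rw [show L = log (s ^ 2) by rw [hs2], log_pow]; norm_num
  have hsL : s * -L ≤ x := by
    have := mul_le_mul_of_nonneg_left (sub_inv_le_two_mul_log hs0 hs1) hs0.le
    rw [mul_sub, mul_inv_cancel₀ hs0.ne'] at this
    nlinarith
  have hxL : 0 ≤ -(x + L) := by linarith [log_le_sub_one_of_pos (by linarith : 0 < 1 - x)]
  have hsxL : s * -(x + L) ≤ x * (1 - s) := by nlinarith
  have hs_x : (1 - s) ^ 2 ≤ x := by nlinarith
  calc (x + L) ^ 2 * (1 - x) = (s * -(x + L)) ^ 2 := by rw [← hs2]; ring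
    _ ≤ (x * (1 - s)) ^ 2 := pow_le_pow_left₀ (mul_nonneg hs0.le hxL) hsxL 2
    _ = x ^ 2 * (1 - s) ^ 2 := by ring
    _ ≤ x ^ 2 * x := by gcongr
    _ = x ^ 3 := by ring

theorem hasDerivAt_log_add_one_sub_inv_mul_log_one_sub {x : ℝ} (hx0 : x ≠ 0) (hx1 : x ≠ 1) :
    HasDerivAt (fun y => log y + (1 - y⁻¹) * log (1 - y)) (2 / x + log (1 - x) / x ^ 2) x := by
  have h1x : 1 - x ≠ 0 := sub_ne_zero.mpr hx1.symm
  refine ((hasDerivAt_log hx0).add (((hasDerivAt_inv hx0).const_sub 1).mul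
    (((hasDerivAt_id' x).const_sub 1).log h1x))).congr_deriv ?_
  field_simp
  ring

theorem hasDerivAt_two_div_add_log_one_sub_div_sq {x : ℝ} (hx0 : x ≠ 0) (hx1 : x ≠ 1) :
    HasDerivAt (fun y => 2 / y + log (1 - y) / y ^ 2)
      (-(2 / x ^ 2) - 1 / ((1 - x) * x ^ 2) - 2 * log (1 - x) / x ^ 3) x := by
  have h1x : 1 - x ≠ 0 := sub_ne_zero.mpr hx1.symm
  refine (((hasDerivAt_inv hx0).const_mul 2).add ((((hasDerivAt_id' x).const_sub 1).log h1x).div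
    (hasDerivAt_pow 2 x) (pow_ne_zero 2 hx0))).congr_deriv ?_
  field_simp
  ring

theorem stmt_1 :
    ConcaveOn ℝ (Set.Ioo (0 : ℝ) 1) (fun x : ℝ => x * (1 - x) ^ (1 - 1 / x)) := by
  have hf : EqOn (fun x => exp (log x + (1 - x⁻¹) * log (1 - x)))
      (fun x : ℝ => x * (1 - x) ^ (1 - 1 / x)) (Ioo 0 1) := by
    rintro x ⟨hx0, hx1⟩
    dsimp only
    rw [exp_add, exp_log hx0, rpow_def_of_pos (by linarith), one_div, mul_comm (log _)]
  refine (concaveOn_exp_comp_of_sq_add_deriv2_nonpos (convex_Ioo 0 1) isOpen_Ioo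
    (fun x hx => hasDerivAt_log_add_one_sub_inv_mul_log_one_sub hx.1.ne' hx.2.ne)
    (fun x hx => hasDerivAt_two_div_add_log_one_sub_div_sq hx.1.ne' hx.2.ne)
    (fun x hx => ?_)).congr hf
  obtain ⟨hx0, hx1⟩ := hx
  have hclear : (2 / x + log (1 - x) / x ^ 2) ^ 2
      + (-(2 / x ^ 2) - 1 / ((1 - x) * x ^ 2) - 2 * log (1 - x) / x ^ 3)
      = ((x + log (1 - x)) ^ 2 * (1 - x) - x ^ 3) / ((1 - x) * x ^ 4) := by
    field_simp
    ring
  rw [hclear]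
  exact div_nonpos_of_nonpos_of_nonneg (sub_nonpos.mpr (add_log_one_sub_sq_mul_le_cube hx0.le hx1))
    (mul_nonneg (by linarith) (by positivity))
end

section
/- For all real x with 0 ≤ x < 1, one has 4x·ln(1-x) + (ln(1-x))^2 ≥ -3x^2 - 2x^3. -/
theorem stmt_2 (x : ℝ) (hx0 : 0 ≤ x) (hx1 : x < 1) :
    4 * x * Real.log (1 - x) + (Real.log (1 - x)) ^ 2 ≥ -3 * x ^ 2 - 2 * x ^ 3 := by
  set L := Real.log (1 - x) with hL
  have h1x : 0 < 1 - x := by linarith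
  have hax : |x| < 1 := by rw [abs_of_nonneg hx0]; exact hx1
  have h1 : L ≤ -x := by
    have := Real.log_le_sub_one_of_pos h1x
    linarith
  have h2 := Real.abs_log_sub_add_sum_range_le hax 2
  rw [abs_of_nonneg hx0] at h2
  simp [Finset.sum_range_succ] at h2
  rw [abs_le] at h2
  obtain ⟨h2a, h2b⟩ := h2
  -- h2a : -(x^3/(1-x)) ≤ x + x^2/2 + L
  norm_num at h2a
  have key : (1 - x) * (-L - x - x^2/2) ≤ x^3 := by
    have h3 : -L - x - x^2/2 ≤ x^3/(1-x) := by linarith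
    have := mul_le_mul_of_nonneg_left h3 (le_of_lt h1x)
    rwa [mul_div_cancel₀ _ (ne_of_gt h1x)] at this
  nlinarith [sq_nonneg (L + 2*x), mul_nonneg hx0 hx0, sq_nonneg x, sq_nonneg (x*(1-2*x)),
    mul_nonneg (mul_nonneg hx0 hx0) hx0, mul_le_mul_of_nonneg_left key hx0,
    mul_nonneg (sq_nonneg (L+2*x)) hx0, sq_nonneg (L + x)]
end

section
/- For all real x with 0 ≤ x < 1, the quantity 2x^3 - x^2 + (1-x)·(ln(1-x))^2 - 2x(1-x)·ln(1-x) is nonnegative. -/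
theorem stmt_3 (x : ℝ) (hx0 : 0 ≤ x) (hx1 : x < 1) :
    0 ≤ 2 * x ^ 3 - x ^ 2 + (1 - x) * (Real.log (1 - x)) ^ 2
        - 2 * x * (1 - x) * Real.log (1 - x) := by
  have h1 : (0:ℝ) < 1 - x := by linarith
  have hL : Real.log (1 - x) ≤ (1 - x) - 1 := Real.log_le_sub_one_of_pos h1
  have ht : x ≤ -Real.log (1 - x) := by linarith
  nlinarith [sq_nonneg (Real.log (1-x) + x), mul_nonneg hx0 (sub_nonneg.2 ht),
    mul_nonneg (le_of_lt h1) (mul_nonneg (sub_nonneg.2 ht) (by linarith : (0:ℝ) ≤ -Real.log (1-x) + x))]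
end

section
/- Let A be an NFA whose recurrent states Qʳ form a single closed communicating class, and let Ψ be a merge operation from A to Ã. Then Ψ maps every recurrent state of A to a recurrent state of Ã, i.e., Ψ(Qʳ) ⊆ Q̃ʳ. -/
/-- A nondeterministic finite automaton with state set `Q` over alphabet `σ`,
with a distinguished initial state, transition function and termination function. -/
structure NFA' (σ Q : Type) where
  start : Q
  step : Q → σ → Set Q
  accept : Q → Bool

namespace NFA'

variable {σ Q Q' : Type}

/-- `A.Reaches q q'` means `q'` is accessible from `q`, i.e. `q' ∈ τ⋆(q)`. -/
def Reaches (A : NFA' σ Q) : Q → Q → Prop :=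
  Relation.ReflTransGen (fun p q => ∃ a, q ∈ A.step p a)

/-- A state is recurrent iff it belongs to a closed communicating class,
iff every state accessible from it can access it back. -/
def Recurrent (A : NFA' σ Q) (q : Q) : Prop :=
  ∀ q', A.Reaches q q' → A.Reaches q' q

/-- The communicating class of `q`: states that communicate with `q`. -/
def commClass (A : NFA' σ Q) (q : Q) : Set Q :=
  {q' | A.Reaches q q' ∧ A.Reaches q' q}

/-- A set of states is closed if no string leads outside of it: `τ⋆(C) = C`. -/
def Closed (A : NFA' σ Q) (C : Set Q) : Prop :=
  ∀ q ∈ C, ∀ q', A.Reaches q q' → q' ∈ C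

/-- The automaton has a single closed communicating class:
all recurrent states communicate with each other. -/
def SingleClosedClass (A : NFA' σ Q) : Prop :=
  ∀ q q', A.Recurrent q → A.Recurrent q' → A.Reaches q q'

/-- `τ₁(S)`: all states reachable from `S` by a single transition. -/
def step1 (A : NFA' σ Q) (S : Set Q) : Set Q :=
  {q' | ∃ q ∈ S, ∃ a, q' ∈ A.step q a}

/-- A set of states is `k`-periodic if it admits a partition into `k` (nonempty,
pairwise disjoint) parts `P 0, …, P (k-1)` with `τ₁(P i) = P ((i+1) mod k)`. -/
def Periodic (A : NFA' σ Q) (C : Set Q) (k : ℕ) : Prop :=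
  ∃ P : Fin k → Set Q,
    (∀ i, (P i).Nonempty) ∧
    (∀ i j, i ≠ j → Disjoint (P i) (P j)) ∧
    (⋃ i, P i) = C ∧
    ∀ i : Fin k, A.step1 (P i) = P ⟨(i.val + 1) % k, Nat.mod_lt _ i.pos⟩

/-- A set of states is aperiodic if it is not `k`-periodic for any `k > 1`. -/
def Aperiodic (A : NFA' σ Q) (C : Set Q) : Prop :=
  ∀ k, 1 < k → ¬ A.Periodic C k

/-- The transition function extended to strings (lists of symbols). -/
def stepStr (A : NFA' σ Q) : Q → List σ → Set Q
  | q, [] => {q}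
  | q, a :: x => ⋃ p ∈ A.step q a, A.stepStr p x

/-- A merge operation from `A` to `B` realized by a map `Ψ` on states. -/
structure MergeOp (A : NFA' σ Q) (B : NFA' σ Q') (Ψ : Q → Q') : Prop where
  surjective : Function.Surjective Ψ
  start_eq : Ψ A.start = B.start
  accept_eq : ∀ q, A.accept q = B.accept (Ψ q)
  step_mem : ∀ q a q', q' ∈ A.step q a → Ψ q' ∈ B.step (Ψ q) a

end NFA'

open NFA'

/-! In a finite automaton every state reaches a recurrent one, so when all recurrent states
communicate, every state reaches every recurrent state `q`. A merge operation maps paths to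
paths and is surjective, hence every state of `B` reaches `Ψ q`. -/

namespace NFA'

variable {σ Q Q' : Type}

theorem exists_reaches_recurrent [Finite Q] (A : NFA' σ Q) (q : Q) :
    ∃ r, A.Reaches q r ∧ A.Recurrent r := by
  -- A state whose reachable set is smallest among those reachable from `q` is recurrent.
  obtain ⟨r, hqr, hmin⟩ := Set.exists_min_image {r | A.Reaches q r}
    (fun r => {p | A.Reaches r p}.ncard) (Set.toFinite _) ⟨q, .refl⟩
  refine ⟨r, hqr, fun r' hrr' => ?_⟩
  have hsub : {p | A.Reaches r' p} ⊆ {p | A.Reaches r p} := fun p hp => hrr'.trans hp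
  have heq := Set.eq_of_subset_of_ncard_le hsub (hmin r' (hqr.trans hrr')) (Set.toFinite _)
  exact heq.ge .refl

theorem SingleClosedClass.reaches_of_recurrent [Finite Q] {A : NFA' σ Q}
    (hA : A.SingleClosedClass) {q : Q} (hq : A.Recurrent q) (p : Q) : A.Reaches p q := by
  obtain ⟨r, hpr, hr⟩ := A.exists_reaches_recurrent p
  exact hpr.trans (hA r q hr hq)

theorem MergeOp.reaches_map {A : NFA' σ Q} {B : NFA' σ Q'} {Ψ : Q → Q'}
    (hΨ : MergeOp A B Ψ) {p q : Q} (h : A.Reaches p q) : B.Reaches (Ψ p) (Ψ q) :=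
  h.lift Ψ fun _ _ ⟨a, ha⟩ => ⟨a, hΨ.step_mem _ a _ ha⟩

end NFA'

theorem stmt_14_general {σ Q Q' : Type} [Fintype Q]
    (A : NFA' σ Q) (B : NFA' σ Q') (Ψ : Q → Q')
    (hsingle : A.SingleClosedClass) (hΨ : MergeOp A B Ψ) :
    ∀ q : Q, A.Recurrent q → B.Recurrent (Ψ q) := by
  intro q hq q' _
  obtain ⟨p, rfl⟩ := hΨ.surjective q'
  exact hΨ.reaches_map (hsingle.reaches_of_recurrent hq p)

/-- If the recurrent states of `A` form a single closed communicating class, then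
a merge operation maps every recurrent state of `A` to a recurrent state of `B`. -/
theorem stmt_14 {σ Q Q' : Type} [Fintype Q] [Nonempty σ]
    (A : NFA' σ Q) (B : NFA' σ Q') (Ψ : Q → Q')
    (htotal : ∀ q a, (A.step q a).Nonempty)
    (hsingle : A.SingleClosedClass) (hΨ : MergeOp A B Ψ) :
    ∀ q : Q, A.Recurrent q → B.Recurrent (Ψ q) :=
  stmt_14_general A B Ψ hsingle hΨ
end

section
/- Let A be an NFA with no unreachable states containing a single closed communicating class, and let Ψ be a merge operation from A to Ã. Then Ã also contains a single closed communicating class, i.e., any two recurrent states of Ã communicate. -/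
open NFA'

lemma reaches_map {σ Q Q' : Type} {A : NFA' σ Q} {B : NFA' σ Q'} {Ψ : Q → Q'}
    (hΨ : MergeOp A B Ψ) {p q : Q} (h : A.Reaches p q) : B.Reaches (Ψ p) (Ψ q) := by
  induction h with
  | refl => exact Relation.ReflTransGen.refl
  | tail _ hstep ih =>
    obtain ⟨a, ha⟩ := hstep
    exact ih.tail ⟨a, hΨ.step_mem _ _ _ ha⟩

lemma exists_recurrent {σ Q : Type} [Fintype Q] (A : NFA' σ Q) (q : Q) :
    ∃ r, A.Reaches q r ∧ A.Recurrent r := by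
  classical
  suffices h : ∀ n (q : Q), ({p | A.Reaches q p}).ncard ≤ n →
      ∃ r, A.Reaches q r ∧ A.Recurrent r from
    h _ q le_rfl
  intro n
  induction n with
  | zero =>
    intro q hq
    exfalso
    have : q ∈ {p | A.Reaches q p} := Relation.ReflTransGen.refl
    have hne : ({p | A.Reaches q p}).Nonempty := ⟨q, this⟩
    have := Set.ncard_pos (Set.toFinite _) |>.mpr hne
    omega
  | succ n ih =>
    intro q hq
    by_cases hrec : A.Recurrent q
    · exact ⟨q, Relation.ReflTransGen.refl, hrec⟩
    · simp only [Recurrent, not_forall] at hrec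
      obtain ⟨q', hqq', hnq⟩ := hrec
      have hsub : {p | A.Reaches q' p} ⊆ {p | A.Reaches q p} :=
        fun p hp => hqq'.trans hp
      have hssub : {p | A.Reaches q' p} ⊂ {p | A.Reaches q p} := by
        refine ⟨hsub, fun hle => hnq (hle Relation.ReflTransGen.refl)⟩
      have hlt := Set.ncard_lt_ncard hssub (Set.toFinite _)
      obtain ⟨r, hr, hrrec⟩ := ih q' (by omega)
      exact ⟨r, hqq'.trans hr, hrrec⟩

/-- If `A` has no unreachable states and a single closed communicating class, then
so does any merge of `A`: any two recurrent states of `B` communicate. -/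
theorem stmt_16 {σ Q Q' : Type} [Fintype Q] [Nonempty σ]
    (A : NFA' σ Q) (B : NFA' σ Q') (Ψ : Q → Q')
    (htotal : ∀ q a, (A.step q a).Nonempty)
    (hreach : ∀ q : Q, A.Reaches A.start q)
    (hsingle : A.SingleClosedClass) (hΨ : MergeOp A B Ψ) :
    B.SingleClosedClass := by
  intro qt qt' hrec hrec'
  obtain ⟨p, rfl⟩ := hΨ.surjective qt
  obtain ⟨p', rfl⟩ := hΨ.surjective qt'
  obtain ⟨r, hpr, hr⟩ := exists_recurrent A p
  obtain ⟨r', hpr', hr'⟩ := exists_recurrent A p'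
  have h1 : B.Reaches (Ψ p) (Ψ r) := reaches_map hΨ hpr
  have h2 : B.Reaches (Ψ r) (Ψ r') := reaches_map hΨ (hsingle r r' hr hr')
  have h3 : B.Reaches (Ψ p') (Ψ r') := reaches_map hΨ hpr'
  exact (h1.trans h2).trans (hrec' _ h3)
end
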